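/- Let d ≥ 1, α ∈ (0, d), and let 1 < q ≤ d. Let b : ℝ^d → [0,∞) be measurable and A ≥ 0 be such that ∫_{B_r(x)} b^q dy ≤ A^q r^{d - qα} for all x and r > 0. Then for every x ∈ ℝ^d and every ρ > 0, R_α(b^q)(x) ≤ N ρ^α 𝕄(b^q)(x) + N ρ^{α - qα} A^q, where N depends only on α, d, q; optimizing over ρ (taking ρ^{qα} = A^q / 𝕄(b^q)(x)) yields R_α(b^q)(x) ≤ N A (𝕄(b^q)(x))^{1 - 1/q}. -/

import Mathlib

open MeasureTheory Metric ENNReal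
open scoped FourierTransform

/-- Riesz potential of an `ℝ≥0∞`-valued function:
`R_α g (x) = ∫ g(x+y) |y|^(α-d) dy`. -/
noncomputable def riesz {d : ℕ} (α : ℝ) (g : EuclideanSpace ℝ (Fin d) → ℝ≥0∞)
    (x : EuclideanSpace ℝ (Fin d)) : ℝ≥0∞ :=
  ∫⁻ y, g (x + y) * ENNReal.ofReal (‖y‖ ^ (α - (d : ℝ)))

/-- Riesz potential of a real-valued function. -/
noncomputable def rieszR {d : ℕ} (α : ℝ) (f : EuclideanSpace ℝ (Fin d) → ℝ)
    (x : EuclideanSpace ℝ (Fin d)) : ℝ :=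
  ∫ y, f (x + y) * ‖y‖ ^ (α - (d : ℝ))

/-- Hardy–Littlewood maximal function: sup over balls containing `x`
of the average of `g` over the ball. -/
noncomputable def maxFun {d : ℕ} (g : EuclideanSpace ℝ (Fin d) → ℝ≥0∞)
    (x : EuclideanSpace ℝ (Fin d)) : ℝ≥0∞ :=
  ⨆ (z : EuclideanSpace ℝ (Fin d)) (r : ℝ) (_ : x ∈ ball z r),
    (∫⁻ y in ball z r, g y) / volume (ball z r)

/-! Hedberg's argument, with `g = b^q`. Cut `{y ≠ 0}` into the dyadic shells
`ρ 2^k ≤ |y| < ρ 2^(k+1)`, `k ∈ ℤ`. On a shell the kernel `|y|^(α-d)` is at most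
`(ρ 2^k)^(α-d)`, and the shell translated by `x` lies in `B_{ρ 2^(k+1)}(x)`. For `k < 0` the
integral of `g` over that ball is at most `𝕄 g(x)` times its volume `≈ (ρ 2^k)^d`, for `k ≥ 0` it
is controlled by the Morrey condition; the two resulting series are geometric with ratios
`2^(-α)` and `2^(α-qα)`, giving `N ρ^α 𝕄 g(x) + N ρ^(α-qα) A^q`. The choice
`ρ^α = A 𝕄 g(x)^(-1/q)` makes both terms equal to `N A 𝕄 g(x)^(1-1/q)`; when `𝕄 g(x) = 0` one
lets `ρ → ∞` instead. -/

open Set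

section Shells

variable {E : Type*} [NormedAddCommGroup E]

lemma iUnion_shell_zpow_eq_compl_zero {ρ : ℝ} (hρ : 0 < ρ) :
    ⋃ k : ℤ, ball (0 : E) (2 * (ρ * 2 ^ k)) \ ball 0 (ρ * 2 ^ k) = {0}ᶜ := by
  ext y
  simp only [mem_iUnion, Set.mem_sdiff, mem_ball_zero_iff, not_lt, mem_compl_iff,
    mem_singleton_iff, ← norm_pos_iff]
  constructor
  · rintro ⟨k, -, hk⟩
    exact (by positivity : (0 : ℝ) < ρ * 2 ^ k).trans_le hk
  · intro hy
    obtain ⟨k, hk, hk'⟩ := exists_mem_Ico_zpow (div_pos hy hρ) one_lt_two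
    refine ⟨k, ?_, ?_⟩
    · rw [zpow_add_one₀ two_ne_zero, div_lt_iff₀ hρ] at hk'
      exact hk'.trans_eq (by ring)
    · rwa [le_div_iff₀ hρ, mul_comm] at hk

variable [MeasurableSpace E] {μ : Measure E}

lemma lintegral_le_tsum_shell [NullSingletonClass μ] (f : E → ℝ≥0∞) {ρ : ℝ}
    (hρ : 0 < ρ) :
    ∫⁻ y, f y ∂μ ≤
      ∑' k : ℤ, ∫⁻ y in ball 0 (2 * (ρ * 2 ^ k)) \ ball 0 (ρ * 2 ^ k), f y ∂μ := by
  conv_lhs =>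
    rw [← restrict_compl_singleton (μ := μ) 0, ← iUnion_shell_zpow_eq_compl_zero hρ]
  exact lintegral_iUnion_le _ f

variable [BorelSpace E] [μ.IsAddLeftInvariant]

lemma setLIntegral_ball_zero_add {f : E → ℝ≥0∞} (hf : Measurable f) (x : E) (r : ℝ) :
    ∫⁻ y in ball 0 r, f (x + y) ∂μ = ∫⁻ z in ball x r, f z ∂μ := by
  rw [← (measurePreserving_add_left μ x).setLIntegral_comp_preimage measurableSet_ball hf]
  simp [preimage_add_ball]

lemma setLIntegral_shell_mul_rpow_le {f : E → ℝ≥0∞} (hf : Measurable f) (x : E) {β r : ℝ}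
    (hβ : β ≤ 0) (hr : 0 < r) :
    ∫⁻ y in ball 0 (2 * r) \ ball 0 r, f (x + y) * ENNReal.ofReal (‖y‖ ^ β) ∂μ ≤
      ENNReal.ofReal (r ^ β) * ∫⁻ z in ball x (2 * r), f z ∂μ := by
  have hfx : Measurable fun y => f (x + y) := hf.comp (measurable_const_add x)
  calc _ ≤ ∫⁻ y in ball 0 (2 * r) \ ball 0 r, f (x + y) * ENNReal.ofReal (r ^ β) ∂μ := by
        refine setLIntegral_mono (hfx.mul_const _) fun y hy => ?_
        have hry : r ≤ ‖y‖ := by simpa using hy.2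
        gcongr _ * ENNReal.ofReal ?_
        exact Real.rpow_le_rpow_of_nonpos hr hry hβ
    _ ≤ (∫⁻ y in ball 0 (2 * r), f (x + y) ∂μ) * ENNReal.ofReal (r ^ β) := by
        rw [lintegral_mul_const _ hfx]
        gcongr
        exact sdiff_subset
    _ = _ := by rw [setLIntegral_ball_zero_add hf, mul_comm]

end Shells

lemma tsum_ofReal_rpow_mul_pow {ρ c γ : ℝ} (hρ : 0 ≤ ρ) (hc : 0 ≤ c) (hcγ : c ^ γ < 1) :
    ∑' n : ℕ, ENNReal.ofReal ((ρ * c ^ n) ^ γ) = ENNReal.ofReal (ρ ^ γ / (1 - c ^ γ)) := by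
  have hγ0 : 0 ≤ c ^ γ := Real.rpow_nonneg hc γ
  simp_rw [Real.mul_rpow hρ (pow_nonneg hc _), ← Real.rpow_pow_comm hc,
    ENNReal.ofReal_mul (Real.rpow_nonneg hρ _), ENNReal.ofReal_pow hγ0, ENNReal.tsum_mul_left,
    ENNReal.tsum_geometric, ← ENNReal.ofReal_one, ← ENNReal.ofReal_sub _ hγ0,
    ← ENNReal.ofReal_inv_of_pos (sub_pos.2 hcγ), ← ENNReal.ofReal_mul (Real.rpow_nonneg hρ _),
    div_eq_mul_inv]

section Euclidean

variable {d : ℕ} {g : EuclideanSpace ℝ (Fin d) → ℝ≥0∞} {x : EuclideanSpace ℝ (Fin d)}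

lemma setLIntegral_ball_le_maxFun {r : ℝ} (hr : 0 < r) :
    ∫⁻ y in ball x r, g y ≤ maxFun g x * volume (ball x r) := by
  have h : (∫⁻ y in ball x r, g y) / volume (ball x r) ≤ maxFun g x :=
    le_iSup₂_of_le x r (le_iSup_of_le (mem_ball_self hr) le_rfl)
  rwa [ENNReal.div_le_iff (measure_ball_pos volume x hr).ne' measure_ball_lt_top.ne] at h

lemma maxFun_eq_zero_of_setLIntegral_ball_eq_zero
    (h : ∀ z r, 0 < r → ∫⁻ y in ball z r, g y = 0) : maxFun g x = 0 := by
  simp only [maxFun, ENNReal.iSup_eq_zero]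
  intro z r hx
  rw [h z r (pos_of_mem_ball hx), ENNReal.zero_div]

lemma setLIntegral_shell_riesz_le_maxFun (hg : Measurable g) {α r : ℝ} (hαd : α ≤ d)
    (hr : 0 < r) :
    ∫⁻ y in ball 0 (2 * r) \ ball 0 r, g (x + y) * ENNReal.ofReal (‖y‖ ^ (α - d)) ≤
      maxFun g x * volume (ball (0 : EuclideanSpace ℝ (Fin d)) 1) * 2 ^ d *
        ENNReal.ofReal (r ^ α) := by
  have hpow : r ^ (α - d) * (2 * r) ^ d = 2 ^ d * r ^ α := by
    rw [mul_pow, Real.rpow_sub hr, Real.rpow_natCast]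
    field_simp
  have hpow' : (2 : ℝ≥0∞) ^ d * ENNReal.ofReal (r ^ α) =
      ENNReal.ofReal (r ^ (α - d)) * ENNReal.ofReal ((2 * r) ^ d) := by
    rw [← ENNReal.ofReal_mul (by positivity), hpow, ENNReal.ofReal_mul (by positivity),
      ENNReal.ofReal_pow zero_le_two, ENNReal.ofReal_ofNat]
  calc _ ≤ ENNReal.ofReal (r ^ (α - d)) * (maxFun g x * volume (ball x (2 * r))) := by
        grw [setLIntegral_shell_mul_rpow_le hg x (sub_nonpos.2 hαd) hr,
          setLIntegral_ball_le_maxFun (by positivity)]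
    _ = _ := by
        rw [Measure.addHaar_ball_of_pos _ _ (by positivity), finrank_euclideanSpace_fin,
          mul_assoc _ (2 ^ d), hpow']
        ring

lemma setLIntegral_shell_riesz_le_of_morrey (hg : Measurable g) {α σ K r : ℝ} (hαd : α ≤ d)
    (hK : 0 ≤ K) (hr : 0 < r)
    (hmorrey : ∀ r, 0 < r →
      ∫⁻ y in ball x r, g y ≤ ENNReal.ofReal (K * r ^ ((d : ℝ) - σ))) :
    ∫⁻ y in ball 0 (2 * r) \ ball 0 r, g (x + y) * ENNReal.ofReal (‖y‖ ^ (α - d)) ≤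
      ENNReal.ofReal (2 ^ ((d : ℝ) - σ) * K) * ENNReal.ofReal (r ^ (α - σ)) := by
  have hpow : r ^ (α - d) * (K * (2 * r) ^ ((d : ℝ) - σ)) =
      2 ^ ((d : ℝ) - σ) * K * r ^ (α - σ) := by
    rw [Real.mul_rpow zero_le_two hr.le, show α - σ = (α - d) + (d - σ) by ring,
      Real.rpow_add hr]
    ring
  calc _ ≤ ENNReal.ofReal (r ^ (α - d)) * ENNReal.ofReal (K * (2 * r) ^ ((d : ℝ) - σ)) := by
        grw [setLIntegral_shell_mul_rpow_le hg x (sub_nonpos.2 hαd) hr,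
          hmorrey _ (by positivity)]
    _ = _ := by
        rw [← ENNReal.ofReal_mul (by positivity), hpow, ENNReal.ofReal_mul (by positivity)]

theorem riesz_le_maxFun_add_morrey (hg : Measurable g) {α σ K ρ : ℝ} (hα : 0 < α)
    (hαd : α < d) (hασ : α < σ) (hK : 0 ≤ K)
    (hmorrey : ∀ r, 0 < r →
      ∫⁻ y in ball x r, g y ≤ ENNReal.ofReal (K * r ^ ((d : ℝ) - σ)))
    (hρ : 0 < ρ) :
    riesz α g x ≤
      maxFun g x * volume (ball (0 : EuclideanSpace ℝ (Fin d)) 1) * 2 ^ d *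
          ENNReal.ofReal ((ρ * 2⁻¹) ^ α / (1 - 2⁻¹ ^ α)) +
        ENNReal.ofReal (2 ^ ((d : ℝ) - σ) * K) *
          ENNReal.ofReal (ρ ^ (α - σ) / (1 - 2 ^ (α - σ))) := by
  have : Nontrivial (EuclideanSpace ℝ (Fin d)) := by
    have : Nonempty (Fin d) := ⟨⟨0, by exact_mod_cast hα.trans hαd⟩⟩
    infer_instance
  let I : ℝ → ℝ≥0∞ := fun r =>
    ∫⁻ y in ball 0 (2 * r) \ ball 0 r, g (x + y) * ENNReal.ofReal (‖y‖ ^ (α - d))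
  have hshift (n : ℕ) : ρ * 2 ^ (-(n + 1 : ℤ)) = ρ * 2⁻¹ * 2⁻¹ ^ n := by
    rw [zpow_neg, zpow_add_one₀ two_ne_zero, zpow_natCast, mul_inv, inv_pow]
    ring
  calc riesz α g x ≤ ∑' k : ℤ, I (ρ * 2 ^ k) := lintegral_le_tsum_shell _ hρ
    _ = ∑' n : ℕ, I (ρ * 2 ^ (n : ℤ)) + ∑' n : ℕ, I (ρ * 2 ^ (-(n + 1 : ℤ))) :=
        tsum_of_nat_of_neg_add_one ENNReal.summable ENNReal.summable
    _ ≤ ∑' n : ℕ, ENNReal.ofReal (2 ^ ((d : ℝ) - σ) * K) *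
            ENNReal.ofReal ((ρ * 2 ^ n) ^ (α - σ)) +
          ∑' n : ℕ, maxFun g x * volume (ball (0 : EuclideanSpace ℝ (Fin d)) 1) * 2 ^ d *
            ENNReal.ofReal ((ρ * 2⁻¹ * 2⁻¹ ^ n) ^ α) := by
        gcongr with n n
        · rw [zpow_natCast]
          exact setLIntegral_shell_riesz_le_of_morrey hg hαd.le hK (by positivity) hmorrey
        · rw [hshift]
          exact setLIntegral_shell_riesz_le_maxFun hg hαd.le (by positivity)
    _ = _ := by
        rw [ENNReal.tsum_mul_left, ENNReal.tsum_mul_left,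
          tsum_ofReal_rpow_mul_pow hρ.le zero_le_two
            (Real.rpow_lt_one_of_one_lt_of_neg one_lt_two (by linarith)),
          tsum_ofReal_rpow_mul_pow (by positivity) (by norm_num)
            (Real.rpow_lt_one (by norm_num) (by norm_num) hα), add_comm]

theorem exists_riesz_le_maxFun_add_morrey {α σ : ℝ} (hα : 0 < α) (hαd : α < d)
    (hασ : α < σ) :
    ∃ C > 0, ∀ g : EuclideanSpace ℝ (Fin d) → ℝ≥0∞, Measurable g →
      ∀ (x : EuclideanSpace ℝ (Fin d)) (K : ℝ), 0 ≤ K →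
      (∀ r, 0 < r → ∫⁻ y in ball x r, g y ≤ ENNReal.ofReal (K * r ^ ((d : ℝ) - σ))) →
      ∀ ρ, 0 < ρ → riesz α g x ≤
        ENNReal.ofReal (C * ρ ^ α) * maxFun g x + ENNReal.ofReal (C * ρ ^ (α - σ) * K) := by
  have h2α : (2⁻¹ : ℝ) ^ α < 1 := Real.rpow_lt_one (by norm_num) (by norm_num) hα
  have h2ασ : (2 : ℝ) ^ (α - σ) < 1 :=
    Real.rpow_lt_one_of_one_lt_of_neg one_lt_two (by linarith)
  set C₁ : ℝ := (volume (ball (0 : EuclideanSpace ℝ (Fin d)) 1)).toReal * 2 ^ d *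
    (2⁻¹ ^ α / (1 - 2⁻¹ ^ α)) with hC₁
  set C₂ : ℝ := 2 ^ ((d : ℝ) - σ) / (1 - 2 ^ (α - σ)) with hC₂
  have hC₂_pos : 0 < C₂ := div_pos (by positivity) (sub_pos.2 h2ασ)
  refine ⟨max C₁ C₂, lt_max_of_lt_right hC₂_pos, fun g hg x K hK hmorrey ρ hρ => ?_⟩
  refine (riesz_le_maxFun_add_morrey hg hα hαd hασ hK hmorrey hρ).trans (add_le_add ?_ ?_)
  · have h2d : (2 : ℝ≥0∞) ^ d = ENNReal.ofReal (2 ^ d) := by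
      rw [ENNReal.ofReal_pow zero_le_two, ENNReal.ofReal_ofNat]
    have hnear : volume (ball (0 : EuclideanSpace ℝ (Fin d)) 1) * 2 ^ d *
        ENNReal.ofReal ((ρ * 2⁻¹) ^ α / (1 - 2⁻¹ ^ α)) =
          ENNReal.ofReal (C₁ * ρ ^ α) := by
      rw [← ENNReal.ofReal_toReal measure_ball_lt_top.ne, h2d,
        ← ENNReal.ofReal_mul ENNReal.toReal_nonneg, ← ENNReal.ofReal_mul (by positivity),
        Real.mul_rpow hρ.le (by norm_num), hC₁]
      ring_nf
    calc _ = ENNReal.ofReal (C₁ * ρ ^ α) * maxFun g x := by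
          rw [← hnear]
          ring
      _ ≤ _ := by gcongr; exact le_max_left _ _
  · calc _ = ENNReal.ofReal (C₂ * ρ ^ (α - σ) * K) := by
          rw [← ENNReal.ofReal_mul (by positivity), hC₂]
          ring_nf
      _ ≤ _ := by gcongr; exact le_max_right _ _

end Euclidean

lemma exists_rpow_mul_eq_and_rpow_mul_eq {m A α q : ℝ} (hm : 0 < m) (hA : 0 < A)
    (hα : 0 < α) (hq : q ≠ 0) :
    ∃ ρ > 0, ρ ^ α * m = A * m ^ (1 - 1 / q) ∧
      ρ ^ (α - q * α) * A ^ q = A * m ^ (1 - 1 / q) := by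
  set t := A * m ^ (-1 / q)
  have ht : 0 < t := by positivity
  refine ⟨t ^ α⁻¹, by positivity, ?_, ?_⟩
  · rw [Real.rpow_inv_rpow ht.le hα.ne', mul_assoc, ← Real.rpow_add_one hm.ne']
    ring_nf
  · rw [show α - q * α = α * (1 - q) by ring, Real.rpow_mul (by positivity),
      Real.rpow_inv_rpow ht.le hα.ne', Real.mul_rpow hA.le (by positivity),
      ← Real.rpow_mul hm.le, mul_right_comm, ← Real.rpow_add hA, show 1 - q + q = 1 by ring,
      Real.rpow_one, show -1 / q * (1 - q) = 1 - 1 / q by field_simp; ring]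

lemma le_mul_rpow_of_forall_le_add {R M : ℝ≥0∞} {C A α q : ℝ} (hC : 0 < C) (hα : 0 < α)
    (hq : 1 < q) (hA : 0 ≤ A) (hAM : A = 0 → M = 0)
    (h : ∀ ρ, 0 < ρ →
      R ≤ ENNReal.ofReal (C * ρ ^ α) * M + ENNReal.ofReal (C * ρ ^ (α - q * α) * A ^ q)) :
    R ≤ ENNReal.ofReal (2 * C * A) * M ^ (1 - 1 / q) := by
  have hq' : 0 < 1 - 1 / q := by
    rw [sub_pos, div_lt_one (by linarith)]
    exact hq
  rcases eq_or_ne M 0 with rfl | hM0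
  · rw [ENNReal.zero_rpow_of_pos hq', mul_zero]
    have hlim : Filter.Tendsto (fun ρ : ℝ => C * ρ ^ (α - q * α) * A ^ q) Filter.atTop
        (nhds 0) := by
      simpa [neg_sub] using
        ((tendsto_rpow_neg_atTop (y := q * α - α) (by nlinarith)).const_mul C).mul_const (A ^ q)
    refine ge_of_tendsto (by simpa using ENNReal.tendsto_ofReal hlim) ?_
    filter_upwards [Filter.eventually_gt_atTop 0] with ρ hρ
    simpa using h ρ hρ
  obtain hA0 : 0 < A := hA.lt_of_ne fun h => hM0 (hAM h.symm)
  rcases eq_or_ne M ⊤ with rfl | hMt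
  · rw [ENNReal.top_rpow_of_pos hq', ENNReal.mul_top (ENNReal.ofReal_pos.2 (by positivity)).ne']
    exact le_top
  obtain ⟨ρ, hρ, h₁, h₂⟩ :=
    exists_rpow_mul_eq_and_rpow_mul_eq (ENNReal.toReal_pos hM0 hMt) hA0 hα (by linarith : q ≠ 0)
  refine (h ρ hρ).trans_eq ?_
  rw [← ENNReal.ofReal_toReal hMt, ← ENNReal.ofReal_mul (by positivity),
    ENNReal.ofReal_rpow_of_nonneg ENNReal.toReal_nonneg hq'.le,
    ← ENNReal.ofReal_mul (by positivity), ← ENNReal.ofReal_add (by positivity) (by positivity)]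
  congr 1
  linear_combination C * h₁ + C * h₂

theorem riesz_split_and_optimize_general
    (d : ℕ) (α q : ℝ) (hα0 : 0 < α) (hαd : α < d)
    (hq : 1 < q) :
    ∃ N : ℝ, 0 < N ∧
      ∀ b : EuclideanSpace ℝ (Fin d) → ℝ, Measurable b → (∀ x, 0 ≤ b x) →
      ∀ A : ℝ, 0 ≤ A →
      (∀ (x : EuclideanSpace ℝ (Fin d)) (r : ℝ), 0 < r →
        ∫⁻ y in ball x r, ENNReal.ofReal (b y ^ q) ≤
          ENNReal.ofReal (A ^ q * r ^ ((d : ℝ) - q * α))) →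
      (∀ (x : EuclideanSpace ℝ (Fin d)) (ρ : ℝ), 0 < ρ →
        riesz α (fun y => ENNReal.ofReal (b y ^ q)) x ≤
          ENNReal.ofReal (N * ρ ^ α) *
              maxFun (fun y => ENNReal.ofReal (b y ^ q)) x +
            ENNReal.ofReal (N * ρ ^ (α - q * α) * A ^ q)) ∧
      ∀ x : EuclideanSpace ℝ (Fin d),
        riesz α (fun y => ENNReal.ofReal (b y ^ q)) x ≤
          ENNReal.ofReal (N * A) *
            (maxFun (fun y => ENNReal.ofReal (b y ^ q)) x) ^ (1 - 1 / q) := by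
  obtain ⟨C, hC, hriesz⟩ :=
    exists_riesz_le_maxFun_add_morrey (σ := q * α) hα0 hαd (by nlinarith)
  refine ⟨2 * C, by positivity, fun b hb _ A hA hmorrey => ?_⟩
  have hg : Measurable fun y => ENNReal.ofReal (b y ^ q) := (hb.pow_const q).ennreal_ofReal
  have key (x) (ρ : ℝ) (hρ : 0 < ρ) :=
    hriesz _ hg x (A ^ q) (by positivity) (hmorrey x) ρ hρ
  refine ⟨fun x ρ hρ => (key x ρ hρ).trans ?_,
    fun x => le_mul_rpow_of_forall_le_add hC hα0 hq hA ?_ (key x)⟩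
  · gcongr <;> linarith
  · rintro rfl
    refine maxFun_eq_zero_of_setLIntegral_ball_eq_zero fun z r hr => le_antisymm ?_ zero_le
    simpa [Real.zero_rpow (by linarith : q ≠ 0)] using hmorrey z r hr

/-- **Proof of Lemma 4, both steps.** Under the Morrey condition with exponent `q`,
for all `x` and `ρ > 0`:
`R_α(b^q)(x) ≤ N ρ^α 𝕄(b^q)(x) + N ρ^(α - qα) A^q`, and optimizing over `ρ`,
`R_α(b^q)(x) ≤ N A (𝕄(b^q)(x))^(1 - 1/q)`, with `N = N(α,d,q)`. -/
theorem riesz_split_and_optimize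
    (d : ℕ) (hd : 1 ≤ d) (α q : ℝ) (hα0 : 0 < α) (hαd : α < d)
    (hq : 1 < q) (hqd : q ≤ d) :
    ∃ N : ℝ, 0 < N ∧
      ∀ b : EuclideanSpace ℝ (Fin d) → ℝ, Measurable b → (∀ x, 0 ≤ b x) →
      ∀ A : ℝ, 0 ≤ A →
      (∀ (x : EuclideanSpace ℝ (Fin d)) (r : ℝ), 0 < r →
        ∫⁻ y in ball x r, ENNReal.ofReal (b y ^ q) ≤
          ENNReal.ofReal (A ^ q * r ^ ((d : ℝ) - q * α))) →
      (∀ (x : EuclideanSpace ℝ (Fin d)) (ρ : ℝ), 0 < ρ →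
        riesz α (fun y => ENNReal.ofReal (b y ^ q)) x ≤
          ENNReal.ofReal (N * ρ ^ α) *
              maxFun (fun y => ENNReal.ofReal (b y ^ q)) x +
            ENNReal.ofReal (N * ρ ^ (α - q * α) * A ^ q)) ∧
      ∀ x : EuclideanSpace ℝ (Fin d),
        riesz α (fun y => ENNReal.ofReal (b y ^ q)) x ≤
          ENNReal.ofReal (N * A) *
            (maxFun (fun y => ENNReal.ofReal (b y ^ q)) x) ^ (1 - 1 / q) :=
  riesz_split_and_optimize_general d α q hα0 hαd hq
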